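/- Let A and B be effects on a complex separable Hilbert space H. Then every lower bound of A and B lies under a maximal lower bound: for every effect D₀ with D₀ ≤ A and D₀ ≤ B there exists an effect C with D₀ ≤ C, C ≤ A, C ≤ B, and C maximal in lb(A,B) (i.e. for every effect D with D ≤ A, D ≤ B and C ≤ D one has C = D). -/

import Mathlib

open ContinuousLinearMap RCLike Filter Topology
open scoped InnerProductSpace

section Aux
variable {H : Type*} [NormedAddCommGroup H] [InnerProductSpace ℂ H] [CompleteSpace H]

private lemma aux_cs_inner {T : H →L[ℂ] H} (hT : T.IsPositive) (x y : H) :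
    (re ⟪T x, y⟫_ℂ) ^ 2 ≤ re ⟪T x, x⟫_ℂ * re ⟪T y, y⟫_ℂ := by
  have hq : ∀ t : ℝ, 0 ≤ re ⟪T y, y⟫_ℂ * (t * t) + (2 * re ⟪T x, y⟫_ℂ) * t + re ⟪T x, x⟫_ℂ := by
    intro t
    have h0 := hT.re_inner_nonneg_left (x + (t : ℂ) • y)
    have hsymm : re ⟪T y, x⟫_ℂ = re ⟪T x, y⟫_ℂ := by
      have h1 : ⟪T y, x⟫_ℂ = ⟪y, T x⟫_ℂ :=
        (isSelfAdjoint_iff_isSymmetric.mp hT.isSelfAdjoint) y x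
      rw [h1, ← inner_conj_symm, conj_re]
    rw [map_add, map_smul, inner_add_left, inner_add_right, inner_add_right,
      inner_smul_left, inner_smul_right, inner_smul_left, inner_smul_right] at h0
    simp only [Complex.conj_ofReal, conj_ofReal, map_add, re_ofReal_mul, RCLike.re_to_complex,
      Complex.re_ofReal_mul, Complex.add_re] at h0
    simp only [RCLike.re_to_complex] at hsymm ⊢
    rw [hsymm] at h0; nlinarith [h0]
  have hd := discrim_le_zero hq
  rw [discrim] at hd
  nlinarith [hd]

private lemma aux_cs {T : H →L[ℂ] H} (hT : T.IsPositive) (x : H) :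
    ‖T x‖ ^ 2 ≤ ‖T‖ * re ⟪T x, x⟫_ℂ := by
  rcases eq_or_ne (T x) 0 with h | h
  · have : re ⟪T x, x⟫_ℂ = 0 := by simp [h]
    simp [h, this]
  · have h1 := aux_cs_inner hT x (T x)
    have h2 : re ⟪T x, T x⟫_ℂ = ‖T x‖ ^ 2 := by
      rw [← inner_self_eq_norm_sq (𝕜 := ℂ)]
    have h3 : re ⟪T (T x), T x⟫_ℂ ≤ ‖T‖ * ‖T x‖ ^ 2 := by
      calc re ⟪T (T x), T x⟫_ℂ ≤ ‖⟪T (T x), T x⟫_ℂ‖ := RCLike.re_le_norm _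
        _ ≤ ‖T (T x)‖ * ‖T x‖ := norm_inner_le_norm _ _
        _ ≤ (‖T‖ * ‖T x‖) * ‖T x‖ := by
            have := T.le_opNorm (T x); nlinarith [norm_nonneg (T x)]
        _ = ‖T‖ * ‖T x‖ ^ 2 := by ring
    have hpos : (0:ℝ) < ‖T x‖ ^ 2 := by
      have := norm_pos_iff.mpr h; positivity
    nlinarith [h1, h2, h3, hT.re_inner_nonneg_left x, hpos]

omit [CompleteSpace H] in
private lemma aux_re_sub (T S : H →L[ℂ] H) (x : H) :
    re ⟪(T - S) x, x⟫_ℂ = re ⟪T x, x⟫_ℂ - re ⟪S x, x⟫_ℂ := by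
  simp [sub_apply, inner_sub_left]

private lemma aux_mono_le {T S : H →L[ℂ] H} (h : T ≤ S) (x : H) :
    re ⟪T x, x⟫_ℂ ≤ re ⟪S x, x⟫_ℂ := by
  have := ((le_def T S).mp h).re_inner_nonneg_left x
  rw [aux_re_sub] at this
  linarith

private lemma aux_mono_limit (f : ℕ → H →L[ℂ] H) (hmono : Monotone f)
    (h0 : ∀ n, (0:H →L[ℂ] H) ≤ f n) (h1 : ∀ n, f n ≤ 1) :
    ∃ C : H →L[ℂ] H, ∀ x, Tendsto (fun n => f n x) atTop (𝓝 (C x)) := by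
  have hnorm : ∀ n, ‖f n‖ ≤ 1 := fun n =>
    (CStarAlgebra.norm_le_one_iff_of_nonneg (f n) (h0 n)).mpr (h1 n)
  set a : H → ℕ → ℝ := fun x n => re ⟪f n x, x⟫_ℂ with ha
  have hamono : ∀ x, Monotone (a x) := fun x m n hmn => aux_mono_le (hmono hmn) x
  have habdd : ∀ x n, a x n ≤ ‖x‖ ^ 2 := by
    intro x n
    have := aux_mono_le (h1 n) x
    rw [ContinuousLinearMap.one_apply, inner_self_eq_norm_sq (𝕜 := ℂ)] at this; exact this
  have hacauchy : ∀ x, CauchySeq (a x) := by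
    intro x
    exact (tendsto_atTop_ciSup (hamono x) ⟨‖x‖^2, fun v ⟨n, hn⟩ => hn ▸ habdd x n⟩).cauchySeq
  have hkey : ∀ x, ∀ m n, m ≤ n → ‖f n x - f m x‖ ^ 2 ≤ 2 * (a x n - a x m) := by
    intro x m n hmn
    have hp : (f n - f m).IsPositive := (le_def (f m) (f n)).mp (hmono hmn)
    have hcs := aux_cs hp x
    have hnn : ‖f n - f m‖ ≤ 2 := by
      calc ‖f n - f m‖ ≤ ‖f n‖ + ‖f m‖ := norm_sub_le _ _
        _ ≤ 2 := by linarith [hnorm n, hnorm m]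
    have hre : re ⟪(f n - f m) x, x⟫_ℂ = a x n - a x m := aux_re_sub _ _ _
    have hnneg : 0 ≤ a x n - a x m := sub_nonneg.mpr (hamono x hmn)
    calc ‖f n x - f m x‖ ^ 2 = ‖(f n - f m) x‖ ^ 2 := by rw [sub_apply]
      _ ≤ ‖f n - f m‖ * re ⟪(f n - f m) x, x⟫_ℂ := hcs
      _ ≤ 2 * (a x n - a x m) := by rw [hre]; exact mul_le_mul_of_nonneg_right hnn hnneg
  have hfc : ∀ x, CauchySeq (fun n => f n x) := by
    intro x
    rw [Metric.cauchySeq_iff]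
    intro ε hε
    obtain ⟨N, hN⟩ := (Metric.cauchySeq_iff.mp (hacauchy x)) (ε ^ 2 / 2) (by positivity)
    refine ⟨N, fun m hm n hn => ?_⟩
    have key : ∀ p q, N ≤ p → N ≤ q → q ≤ p → dist (f p x) (f q x) < ε := by
      intro p q hp hq hqp
      have h1' := hkey x q p hqp
      have h2' := hN p hp q hq
      rw [Real.dist_eq] at h2'
      have hlt : ‖f p x - f q x‖ ^ 2 < ε ^ 2 := by
        have : a x p - a x q < ε ^ 2 / 2 := lt_of_le_of_lt (le_abs_self _) h2'
        linarith
      have := lt_of_pow_lt_pow_left₀ 2 hε.le hlt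
      rwa [dist_eq_norm]
    rcases le_total m n with h | h
    · rw [dist_comm]; exact key n m hn hm h
    · exact key m n hm hn h
  choose g hg using fun x => cauchySeq_tendsto_of_complete (hfc x)
  have hgadd : ∀ x y, g (x + y) = g x + g y := by
    intro x y
    refine tendsto_nhds_unique (hg (x + y)) ?_
    have := (hg x).add (hg y)
    simpa [map_add] using this
  have hgsmul : ∀ (c : ℂ) (x : H), g (c • x) = c • g x := by
    intro c x
    refine tendsto_nhds_unique (hg (c • x)) ?_
    have := (hg x).const_smul c
    simpa [map_smul] using this
  have hgbound : ∀ x, ‖g x‖ ≤ 1 * ‖x‖ := by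
    intro x
    rw [one_mul]
    refine le_of_tendsto (hg x).norm (Eventually.of_forall fun n => ?_)
    calc ‖f n x‖ ≤ ‖f n‖ * ‖x‖ := (f n).le_opNorm x
      _ ≤ 1 * ‖x‖ := mul_le_mul_of_nonneg_right (hnorm n) (norm_nonneg x)
      _ = ‖x‖ := one_mul _
  exact ⟨LinearMap.mkContinuous
    { toFun := g, map_add' := hgadd, map_smul' := hgsmul } 1 hgbound, fun x => hg x⟩

private lemma aux_sa_of_tendsto {f : ℕ → H →L[ℂ] H} {C : H →L[ℂ] H}
    (hsa : ∀ n, IsSelfAdjoint (f n))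
    (h : ∀ x, Tendsto (fun n => f n x) atTop (𝓝 (C x))) : IsSelfAdjoint C := by
  rw [isSelfAdjoint_iff_isSymmetric]
  intro x y
  have h1 : Tendsto (fun n => ⟪f n x, y⟫_ℂ) atTop (𝓝 ⟪C x, y⟫_ℂ) :=
    (h x).inner tendsto_const_nhds
  have h2 : Tendsto (fun n => ⟪x, f n y⟫_ℂ) atTop (𝓝 ⟪x, C y⟫_ℂ) :=
    tendsto_const_nhds.inner (h y)
  have heq : (fun n => ⟪f n x, y⟫_ℂ) = fun n => ⟪x, f n y⟫_ℂ :=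
    funext fun n => (isSelfAdjoint_iff_isSymmetric.mp (hsa n)) x y
  rw [heq] at h1
  exact tendsto_nhds_unique h1 h2

private lemma aux_re_tendsto {f : ℕ → H →L[ℂ] H} {C : H →L[ℂ] H}
    (h : ∀ x, Tendsto (fun n => f n x) atTop (𝓝 (C x))) (x : H) :
    Tendsto (fun n => re ⟪f n x, x⟫_ℂ) atTop (𝓝 (re ⟪C x, x⟫_ℂ)) :=
  (RCLike.continuous_re.tendsto _).comp ((h x).inner tendsto_const_nhds)

private lemma aux_le_limit {f : ℕ → H →L[ℂ] H} {C g : H →L[ℂ] H}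
    (hC : IsSelfAdjoint C) (hg : IsSelfAdjoint g)
    (h : ∀ x, Tendsto (fun n => f n x) atTop (𝓝 (C x)))
    (hle : ∀ n, f n ≤ g) : C ≤ g := by
  rw [ContinuousLinearMap.le_def]
  refine ⟨isSelfAdjoint_iff_isSymmetric.mp (hg.sub hC), fun x => ?_⟩
  show 0 ≤ re ⟪(g - C) x, x⟫_ℂ
  rw [aux_re_sub, sub_nonneg]
  exact le_of_tendsto (aux_re_tendsto h x) (Eventually.of_forall fun n => aux_mono_le (hle n) x)

private lemma aux_ge_limit {f : ℕ → H →L[ℂ] H} {C : H →L[ℂ] H} (hmono : Monotone f)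
    (hsa : ∀ n, IsSelfAdjoint (f n)) (hC : IsSelfAdjoint C)
    (h : ∀ x, Tendsto (fun n => f n x) atTop (𝓝 (C x))) (m : ℕ) : f m ≤ C := by
  rw [ContinuousLinearMap.le_def]
  refine ⟨isSelfAdjoint_iff_isSymmetric.mp (hC.sub (hsa m)), fun x => ?_⟩
  show 0 ≤ re ⟪(C - f m) x, x⟫_ℂ
  rw [aux_re_sub, sub_nonneg]
  exact ge_of_tendsto (aux_re_tendsto h x)
    (eventually_atTop.mpr ⟨m, fun n hn => aux_mono_le (hmono hn) x⟩)

private lemma aux_chain_seq {α : Type*} [PartialOrder α] {c : Set α} (hchain : IsChain (· ≤ ·) c)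
    (w : ℕ → α) (hw : ∀ n, w n ∈ c) :
    ∃ D : ℕ → α, Monotone D ∧ (∀ n, D n ∈ c) ∧ ∀ n, w n ≤ D n := by
  classical
  set D : ℕ → α := fun n =>
    Nat.rec (w 0) (fun n Dn => if Dn ≤ w (n+1) then w (n+1) else Dn) n with hD
  have hstep : ∀ n, D (n+1) = if D n ≤ w (n+1) then w (n+1) else D n := fun n => rfl
  have hDc : ∀ n, D n ∈ c := by
    intro n
    induction n with
    | zero => exact hw 0
    | succ n ih => rw [hstep]; split_ifs <;> [exact hw (n+1); exact ih]
  have hDmono : Monotone D := by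
    apply monotone_nat_of_le_succ
    intro n
    rw [hstep]
    split_ifs with h
    · exact h
    · exact le_rfl
  refine ⟨D, hDmono, hDc, fun n => ?_⟩
  cases n with
  | zero => exact le_rfl
  | succ n =>
    rw [hstep]
    split_ifs with h
    · exact le_rfl
    · rcases hchain.total (hDc n) (hw (n+1)) with h' | h'
      · exact absurd h' h
      · exact h'

end Aux

/-- every effect lower bound of two effects lies under a maximal
lower bound. -/
theorem effects_lower_bound_below_maximal_lower_bound
    {H : Type*} [NormedAddCommGroup H] [InnerProductSpace ℂ H] [CompleteSpace H]
    [TopologicalSpace.SeparableSpace H]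
    (A B : H →L[ℂ] H) (hA0 : 0 ≤ A) (hA1 : A ≤ 1) (hB0 : 0 ≤ B) (hB1 : B ≤ 1)
    (D₀ : H →L[ℂ] H) (hD₀ : 0 ≤ D₀ ∧ D₀ ≤ 1 ∧ D₀ ≤ A ∧ D₀ ≤ B) :
    ∃ C : H →L[ℂ] H, D₀ ≤ C ∧ (0 ≤ C ∧ C ≤ 1 ∧ C ≤ A ∧ C ≤ B) ∧
      ∀ D : H →L[ℂ] H, (0 ≤ D ∧ D ≤ 1 ∧ D ≤ A ∧ D ≤ B) → C ≤ D → C = D := by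
  classical
  set S : Set (H →L[ℂ] H) := {C | 0 ≤ C ∧ C ≤ 1 ∧ C ≤ A ∧ C ≤ B} with hS
  have hsa_of_mem : ∀ E ∈ S, IsSelfAdjoint E := fun E hE =>
    ((nonneg_iff_isPositive E).mp hE.1).isSelfAdjoint
  have ih : ∀ c ⊆ S, IsChain (· ≤ ·) c → ∀ y ∈ c, ∃ ub ∈ S, ∀ z ∈ c, z ≤ ub := by
    intro c hcS hchain y₀ hy₀
    have : Nonempty H := ⟨0⟩
    obtain ⟨u, hu⟩ := TopologicalSpace.exists_dense_seq H
    set val : ℕ → (H →L[ℂ] H) → ℝ := fun k E => re ⟪E (u k), u k⟫_ℂ with hval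
    have hbdd : ∀ k, BddAbove (val k '' c) := by
      intro k
      refine ⟨‖u k‖ ^ 2, ?_⟩
      rintro v ⟨E, hEc, rfl⟩
      have := aux_mono_le ((hcS hEc).2.1) (u k)
      rw [ContinuousLinearMap.one_apply, inner_self_eq_norm_sq (𝕜 := ℂ)] at this; exact this
    have hne : ∀ k, (val k '' c).Nonempty := fun k => ⟨val k y₀, y₀, hy₀, rfl⟩
    set s : ℕ → ℝ := fun k => sSup (val k '' c) with hs
    have hchoice : ∀ k j : ℕ, ∃ E, E ∈ c ∧ s k - 1 / (j + 1) < val k E := by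
      intro k j
      have hlt : s k - 1 / (j + 1) < s k := by
        have : (0:ℝ) < 1 / (j + 1) := by positivity
        linarith
      obtain ⟨v, ⟨E, hEc, rfl⟩, hv⟩ := exists_lt_of_lt_csSup (hne k) hlt
      exact ⟨E, hEc, hv⟩
    choose g hgc hglt using hchoice
    set w : ℕ → (H →L[ℂ] H) := fun n => g n.unpair.1 n.unpair.2 with hw
    have hwc : ∀ n, w n ∈ c := fun n => hgc _ _
    obtain ⟨D, hDmono, hDc, hwD⟩ := aux_chain_seq hchain w hwc
    obtain ⟨C, htd⟩ := aux_mono_limit D hDmono (fun n => (hcS (hDc n)).1)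
      (fun n => (hcS (hDc n)).2.1)
    have hCsa : IsSelfAdjoint C :=
      aux_sa_of_tendsto (fun n => hsa_of_mem _ (hcS (hDc n))) htd
    have hDleC : ∀ n, D n ≤ C :=
      aux_ge_limit hDmono (fun n => hsa_of_mem _ (hcS (hDc n))) hCsa htd
    have hCS : C ∈ S := by
      refine ⟨?_, ?_, ?_, ?_⟩
      · exact le_trans (hcS (hDc 0)).1 (hDleC 0)
      · exact aux_le_limit hCsa (isPositive_one.isSelfAdjoint) htd
          (fun n => (hcS (hDc n)).2.1)
      · exact aux_le_limit hCsa (((nonneg_iff_isPositive A).mp hA0).isSelfAdjoint) htd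
          (fun n => (hcS (hDc n)).2.2.1)
      · exact aux_le_limit hCsa (((nonneg_iff_isPositive B).mp hB0).isSelfAdjoint) htd
          (fun n => (hcS (hDc n)).2.2.2)
    refine ⟨C, hCS, fun z hzc => ?_⟩
    rw [ContinuousLinearMap.le_def]
    refine ⟨isSelfAdjoint_iff_isSymmetric.mp (hCsa.sub (hsa_of_mem _ (hcS hzc))), fun x => ?_⟩
    have hclosed : IsClosed {x : H | 0 ≤ (C - z).reApplyInnerSelf x} :=
      isClosed_le continuous_const (C - z).reApplyInnerSelf_continuous
    have hdense : ∀ k : ℕ, 0 ≤ (C - z).reApplyInnerSelf (u k) := by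
      intro k
      show 0 ≤ re ⟪(C - z) (u k), u k⟫_ℂ
      rw [aux_re_sub, sub_nonneg]
      have h1 : val k z ≤ s k := le_csSup (hbdd k) ⟨z, hzc, rfl⟩
      have h2 : s k ≤ re ⟪C (u k), u k⟫_ℂ := by
        have hj : ∀ j : ℕ, s k - 1 / (j + 1) ≤ re ⟪C (u k), u k⟫_ℂ := by
          intro j
          have e1 : w (Nat.pair k j) = g k j := by rw [hw]; simp [Nat.unpair_pair]
          have h3 : g k j ≤ C := e1 ▸ ((hwD (Nat.pair k j)).trans (hDleC (Nat.pair k j)))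
          exact (hglt k j).le.trans (aux_mono_le h3 (u k))
        have hlim : Tendsto (fun j : ℕ => s k - 1 / (j + 1 : ℝ)) atTop (𝓝 (s k)) := by
          have := (tendsto_const_nhds (x := s k)).sub tendsto_one_div_add_atTop_nhds_zero_nat
          simpa using this
        exact le_of_tendsto hlim (Eventually.of_forall hj)
      exact h1.trans h2
    have : x ∈ {x : H | 0 ≤ (C - z).reApplyInnerSelf x} := by
      have hsub : Set.range u ⊆ {x : H | 0 ≤ (C - z).reApplyInnerSelf x} := by
        rintro _ ⟨k, rfl⟩; exact hdense k
      have := hclosed.closure_subset_iff.mpr hsub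
      exact this (hu.closure_range ▸ Set.mem_univ x : x ∈ closure (Set.range u))
    exact this
  obtain ⟨m, hD₀m, hmax⟩ := zorn_le_nonempty₀ S ih D₀ hD₀
  exact ⟨m, hD₀m, hmax.1, fun D hD hmD => le_antisymm hmD (hmax.2 hD hmD)⟩
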